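/- arXiv:2111.02554 — 2 statements merged into one kernel-verified Lean document; each statement's English description precedes it below -/
import Mathlib

section
/- Let L, U be payoff processes and suppose (σ*,τ*) ∈ T×T satisfy: (i) J^{U∨L,L,L}(σ*,τ*) = J^{U,L,L}(σ*,τ*); (ii) J^{U∨L,L,L}(σ*,τ) ≤ J^{U∨L,L,L}(σ*,τ*) for all τ ∈ T; (iii) J^{U,L,L}(σ*,τ*) ≤ J^{U,L,L}(σ,τ*) for all σ ∈ T. Then the game with payoff triple (U,L,L) has a value over T, equal to J^{U,L,L}(σ*,τ*), and (σ*,τ*) is a saddle point for it. -/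
open MeasureTheory

/-- The Dynkin game payoff functional
`J^{A,M,L}(σ,τ) = E[L_τ 1_{τ<σ} + A_σ 1_{σ<τ} + M_τ 1_{τ=σ}]`. -/
noncomputable def dynkinJ {Ω : Type*} [MeasurableSpace Ω] (μ : Measure Ω)
    (A M L : ℝ → Ω → ℝ) (σ τ : Ω → ℝ) : ℝ :=
  ∫ ω, (if τ ω < σ ω then L (τ ω) ω
        else if σ ω < τ ω then A (σ ω) ω
        else M (τ ω) ω) ∂μ

/-!
Raising the payoff `U` to `U ∨ L` only changes the integrand on `{σ < τ}`, and there it can only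
increase it, so `J^{U,L,L}(σ*, ·) ≤ J^{U∨L,L,L}(σ*, ·) ≤ J^{U∨L,L,L}(σ*, τ*) = J^{U,L,L}(σ*, τ*)`.
Together with (iii) this makes `(σ*, τ*)` a saddle point of `J^{U,L,L}`, and a saddle point
pins both `inf sup` and `sup inf` to its value.
-/

theorem iInf_iSup_eq_and_iSup_iInf_eq_of_saddle {ι κ α : Type*} [CompleteLattice α]
    {f : ι → κ → α} {i₀ : ι} {j₀ : κ}
    (hle : ∀ j, f i₀ j ≤ f i₀ j₀) (hge : ∀ i, f i₀ j₀ ≤ f i j₀) :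
    ⨅ i, ⨆ j, f i j = f i₀ j₀ ∧ ⨆ j, ⨅ i, f i j = f i₀ j₀ := by
  have hupper : ⨅ i, ⨆ j, f i j ≤ f i₀ j₀ := iInf_le_of_le i₀ (iSup_le hle)
  have hlower : f i₀ j₀ ≤ ⨆ j, ⨅ i, f i j := le_iSup_of_le j₀ (le_iInf hge)
  have hminimax : ⨆ j, ⨅ i, f i j ≤ ⨅ i, ⨆ j, f i j := iSup_iInf_le_iInf_iSup (flip f)
  exact ⟨le_antisymm hupper (hlower.trans hminimax), le_antisymm (hminimax.trans hupper) hlower⟩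

namespace DynkinGame

variable {Ω : Type*}

noncomputable def payoff (A M L : ℝ → Ω → ℝ) (σ τ : Ω → ℝ) (ω : Ω) : ℝ :=
  if τ ω < σ ω then L (τ ω) ω else if σ ω < τ ω then A (σ ω) ω else M (τ ω) ω

theorem abs_payoff_le {A M L : ℝ → Ω → ℝ} {C : ℝ} (hA : ∀ t ω, |A t ω| ≤ C)
    (hM : ∀ t ω, |M t ω| ≤ C) (hL : ∀ t ω, |L t ω| ≤ C) (σ τ : Ω → ℝ) (ω : Ω) :
    |payoff A M L σ τ ω| ≤ C := by
  unfold payoff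
  split_ifs
  exacts [hL _ ω, hA _ ω, hM _ ω]

theorem payoff_mono_left {A A' : ℝ → Ω → ℝ} (hAA' : ∀ t ω, A t ω ≤ A' t ω)
    (M L : ℝ → Ω → ℝ) (σ τ : Ω → ℝ) : payoff A M L σ τ ≤ payoff A' M L σ τ := by
  intro ω
  unfold payoff
  split_ifs
  exacts [le_rfl, hAA' _ ω, le_rfl]

variable [MeasurableSpace Ω]

theorem measurable_of_isStoppingTime {ℱ : Filtration ℝ ‹MeasurableSpace Ω›} {η : Ω → ℝ}
    (hη : IsStoppingTime ℱ (fun ω => (η ω : WithTop ℝ))) : Measurable η :=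
  hη.measurable'.untopD 0

theorem measurable_payoff {A M L : ℝ → Ω → ℝ}
    (hA : Measurable fun p : ℝ × Ω => A p.1 p.2) (hM : Measurable fun p : ℝ × Ω => M p.1 p.2)
    (hL : Measurable fun p : ℝ × Ω => L p.1 p.2) {σ τ : Ω → ℝ}
    (hσ : Measurable σ) (hτ : Measurable τ) : Measurable (payoff A M L σ τ) :=
  Measurable.ite (measurableSet_lt hτ hσ) (hL.comp (hτ.prodMk measurable_id))
    (Measurable.ite (measurableSet_lt hσ hτ) (hA.comp (hσ.prodMk measurable_id))
      (hM.comp (hτ.prodMk measurable_id)))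

theorem integrable_payoff {μ : Measure Ω} [IsFiniteMeasure μ] {A M L : ℝ → Ω → ℝ}
    (hAm : Measurable fun p : ℝ × Ω => A p.1 p.2) (hMm : Measurable fun p : ℝ × Ω => M p.1 p.2)
    (hLm : Measurable fun p : ℝ × Ω => L p.1 p.2) {C : ℝ} (hA : ∀ t ω, |A t ω| ≤ C)
    (hM : ∀ t ω, |M t ω| ≤ C) (hL : ∀ t ω, |L t ω| ≤ C) {σ τ : Ω → ℝ}
    (hσ : Measurable σ) (hτ : Measurable τ) : Integrable (payoff A M L σ τ) μ :=
  (integrable_const C).mono' (measurable_payoff hAm hMm hLm hσ hτ).aestronglyMeasurable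
    (.of_forall (abs_payoff_le hA hM hL σ τ))

theorem dynkinJ_mono_left {μ : Measure Ω} {A A' M L : ℝ → Ω → ℝ} {σ τ : Ω → ℝ}
    (hAA' : ∀ t ω, A t ω ≤ A' t ω) (hint : Integrable (payoff A M L σ τ) μ)
    (hint' : Integrable (payoff A' M L σ τ) μ) :
    dynkinJ μ A M L σ τ ≤ dynkinJ μ A' M L σ τ :=
  integral_mono hint hint' (payoff_mono_left hAA' M L σ τ)

end DynkinGame

open DynkinGame

/-- Corollary 2.2: if `(σ*,τ*)` satisfies the extended saddle point conditions with
upper payoff `U ∨ L`, then the game with payoff triple `(U,L,L)` has a value over `T`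
equal to `J^{U,L,L}(σ*,τ*)`, and `(σ*,τ*)` is a saddle point for it. -/
theorem corollary_saddle_point {Ω : Type*} [MeasurableSpace Ω]
    (μ : Measure Ω) [IsProbabilityMeasure μ]
    (ℱ : Filtration ℝ ‹MeasurableSpace Ω›)
    (U L : ℝ → Ω → ℝ)
    (hmeasU : Measurable fun p : ℝ × Ω => U p.1 p.2)
    (hmeasL : Measurable fun p : ℝ × Ω => L p.1 p.2)
    (hbdd : ∃ C : ℝ, ∀ t ω, |U t ω| ≤ C ∧ |L t ω| ≤ C)
    (T : Set (Ω → ℝ)) (hstop : ∀ η ∈ T, IsStoppingTime ℱ (fun ω => (η ω : WithTop ℝ)))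
    (σstar τstar : Ω → ℝ) (hσstar : σstar ∈ T) (hτstar : τstar ∈ T)
    (h1 : dynkinJ μ (fun t ω => max (U t ω) (L t ω)) L L σstar τstar =
          dynkinJ μ U L L σstar τstar)
    (h2 : ∀ τ ∈ T, dynkinJ μ (fun t ω => max (U t ω) (L t ω)) L L σstar τ ≤
          dynkinJ μ (fun t ω => max (U t ω) (L t ω)) L L σstar τstar)
    (h3 : ∀ σ' ∈ T, dynkinJ μ U L L σstar τstar ≤ dynkinJ μ U L L σ' τstar) :
    ((∀ τ ∈ T, dynkinJ μ U L L σstar τ ≤ dynkinJ μ U L L σstar τstar) ∧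
     (∀ σ' ∈ T, dynkinJ μ U L L σstar τstar ≤ dynkinJ μ U L L σ' τstar)) ∧
    (⨅ σ' : T, ⨆ τ : T, ((dynkinJ μ U L L σ'.1 τ.1 : ℝ) : EReal)) =
      ((dynkinJ μ U L L σstar τstar : ℝ) : EReal) ∧
    (⨆ τ : T, ⨅ σ' : T, ((dynkinJ μ U L L σ'.1 τ.1 : ℝ) : EReal)) =
      ((dynkinJ μ U L L σstar τstar : ℝ) : EReal) := by
  obtain ⟨C, hC⟩ := hbdd
  have hU : ∀ t ω, |U t ω| ≤ C := fun t ω => (hC t ω).1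
  have hL : ∀ t ω, |L t ω| ≤ C := fun t ω => (hC t ω).2
  have hUL : ∀ t ω, |max (U t ω) (L t ω)| ≤ C := fun t ω =>
    abs_max_le_max_abs_abs.trans (max_le (hU t ω) (hL t ω))
  have hσ : Measurable σstar := measurable_of_isStoppingTime (hstop _ hσstar)
  have hmax : ∀ τ ∈ T, dynkinJ μ U L L σstar τ ≤
      dynkinJ μ (fun t ω => max (U t ω) (L t ω)) L L σstar τ := fun τ hτ =>
    have hτ := measurable_of_isStoppingTime (hstop τ hτ)
    dynkinJ_mono_left (fun t ω => le_max_left _ _)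
      (integrable_payoff hmeasU hmeasL hmeasL hU hL hL hσ hτ)
      (integrable_payoff (hmeasU.max hmeasL) hmeasL hmeasL hUL hL hL hσ hτ)
  have hbest : ∀ τ ∈ T, dynkinJ μ U L L σstar τ ≤ dynkinJ μ U L L σstar τstar :=
    fun τ hτ => (hmax τ hτ).trans ((h2 τ hτ).trans h1.le)
  exact ⟨⟨hbest, h3⟩, iInf_iSup_eq_and_iSup_iInf_eq_of_saddle
    (f := fun (σ' τ : T) => ((dynkinJ μ U L L σ'.1 τ.1 : ℝ) : EReal))
    (i₀ := ⟨σstar, hσstar⟩) (j₀ := ⟨τstar, hτstar⟩)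
    (fun τ => EReal.coe_le_coe (hbest τ.1 τ.2)) (fun σ' => EReal.coe_le_coe (h3 σ'.1 σ'.2))⟩
end

section
/- With the same notation (r,q,γ,c,σ > 0, λ ≥ 0, α_λ > 1, β_λ < 0 roots of Q_λ, α = α_0 > 1), the threshold x*_{co,λ} satisfies x*_{co,λ} < (c/(γr))·α/(α−1). Equivalently, β_λ((λ+q)r + αλ(q−r)) < α(λ+r)q. -/
/-- Lemma 4.1 (upper bound): the threshold `x*_{co,λ}` satisfies
`x*_{co,λ} < (c/(γr))·α/(α−1)`, equivalently
`β_λ((λ+q)r + αλ(q−r)) < α(λ+r)q`. -/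
theorem threshold_upper_bound (r q g c s l a b : ℝ)
    (hr : 0 < r) (hq : 0 < q) (hg : 0 < g) (hc : 0 < c) (hs : 0 < s) (hl : 0 ≤ l)
    (ha : s ^ 2 / 2 * a ^ 2 + (r - q - s ^ 2 / 2) * a - r = 0) (ha1 : 1 < a)
    (hb : s ^ 2 / 2 * b ^ 2 + (r - q - s ^ 2 / 2) * b - (r + l) = 0) (hb1 : b < 0) :
    c * (l + q) * (a * (l + r) - b * r) /
        (g * r * (l + r) * (a * (l + q) - l - b * q)) <
      (c / (g * r)) * (a / (a - 1)) ∧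
    b * ((l + q) * r + a * l * (q - r)) < a * (l + r) * q := by
  -- key: (r - q) * a < r, from the quadratic for a
  have hsa : 0 < s ^ 2 / 2 * a * (a - 1) := by
    have h1 : 0 < a - 1 := by linarith
    have h2 : 0 < a := by linarith
    positivity
  have hkey : (r - q) * a < r := by nlinarith [hsa]
  -- E > 0
  have hE : 0 < (l + q) * r + a * l * (q - r) := by nlinarith [mul_le_mul_of_nonneg_left hkey.le hl]
  have h2 : b * ((l + q) * r + a * l * (q - r)) < a * (l + r) * q := by
    have h0 : b * ((l + q) * r + a * l * (q - r)) < 0 := mul_neg_of_neg_of_pos hb1 hE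
    have h1 : 0 < a * (l + r) * q := by
      have : 0 < a := by linarith
      have : 0 < l + r := by linarith
      positivity
    linarith
  refine ⟨?_, h2⟩
  have hden1 : 0 < g * r * (l + r) * (a * (l + q) - l - b * q) := by
    have : 0 < a * (l + q) - l - b * q := by nlinarith [mul_pos hq (neg_pos.mpr hb1)]
    have h2 : 0 < l + r := by linarith
    have := mul_pos (mul_pos (mul_pos hg hr) h2) this
    linarith
  have hgr1 : (0:ℝ) < g * r * (a - 1) := by
    have : 0 < a - 1 := by linarith
    positivity
  rw [div_mul_div_comm, div_lt_div_iff₀ hden1 hgr1]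
  nlinarith [mul_lt_mul_of_pos_left h2 (show (0:ℝ) < c * g * r by positivity)]
end
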